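/- Let n ≥ 3 be an integer, ℓ > 0, r₀ > 0, a ∈ ℝ, r₊ > 0, λ > 0, β > 0, G > 0, and define V : (0,∞) → ℝ by V(r) = (r²/ℓ²)(1 + a/r^{n−1} − r₀ⁿ/rⁿ), assumed positive on (r₊, ∞), and H(r) := V(r)^{−1/2}·(V'(r)/2 + (n−2)·V(r)/r). Then lim_{r→∞} r^{n−1}·V(r)^{1/2}·(H(r) − (n−1)/ℓ) = r₀ⁿ/(2ℓ²). Consequently the Hawking–Horowitz mass E_HH(g) := −(1/(8πG))·lim_{r→∞} λβ r^{n−2} V(r)^{1/2} · r · (H(r) − (n−1)/ℓ) equals −λβr₀ⁿ/(16πGℓ²), which is negative for every a ∈ ℝ. -/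

import Mathlib

open Filter Topology

/-! With `V = (r/ℓ)² W`, `k = n - 1` and `s = √W`, the identity `s² - s = (s² - 1)/2 + (s - 1)²/2`
gives `√V (H - k/ℓ) = r/(2ℓ²) (k(W - 1) + rW' + k(s - 1)²)`. The `a`-term of
`W - 1 = a/rᵏ - r₀ⁿ/rⁿ` solves `kf + rf' = 0`, so `k(W - 1) + rW' = r₀ⁿ/rⁿ` exactly and
`r^(n-1) √V (H - k/ℓ) = (r₀ⁿ + k rⁿ (s - 1)²)/(2ℓ²)`. Finally `(s - 1)² ≤ (W - 1)² = O(r^(-2k))`,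
and `2k > n` because `n ≥ 3`. -/

lemma sq_sqrt_sub_one_le (x : ℝ) : (√x - 1) ^ 2 ≤ (x - 1) ^ 2 := by
  rcases le_or_gt 0 x with hx | hx
  · obtain ⟨s, hs, rfl⟩ : ∃ s, 0 ≤ s ∧ s ^ 2 = x := ⟨√x, Real.sqrt_nonneg x, Real.sq_sqrt hx⟩
    rw [Real.sqrt_sq hs]
    nlinarith [mul_nonneg (sq_nonneg (s - 1)) (mul_nonneg hs (by linarith : (0 : ℝ) ≤ s + 2))]
  · rw [Real.sqrt_eq_zero_of_nonpos hx.le]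
    nlinarith

lemma hasDerivAt_const_div_pow (a : ℝ) (k : ℕ) {x : ℝ} (hx : x ≠ 0) :
    HasDerivAt (fun y => a / y ^ k) (-(k * a / x ^ (k + 1))) x := by
  refine ((hasDerivAt_const x a).fun_div (hasDerivAt_pow k x) (pow_ne_zero k hx)).congr_deriv ?_
  rcases k with _ | k
  · simp
  · rw [Nat.add_sub_cancel]
    field_simp
    ring

/-- The bracket of `V(r) = r²/ℓ² · (1 + a/r^{n-1} - r₀ⁿ/rⁿ)`, with `k = n - 1` and `c = r₀ⁿ`. -/
noncomputable def blackening (a c : ℝ) (k : ℕ) (r : ℝ) : ℝ := 1 + a / r ^ k - c / r ^ (k + 1)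

lemma hasDerivAt_blackening (a c : ℝ) (k : ℕ) {r : ℝ} (hr : r ≠ 0) :
    HasDerivAt (blackening a c k) (-(k * a / r ^ (k + 1)) + (k + 1) * c / r ^ (k + 2)) r := by
  refine (((hasDerivAt_const_div_pow a k hr).const_add 1).sub
    (hasDerivAt_const_div_pow c (k + 1) hr)).congr_deriv ?_
  push_cast
  ring

lemma natCast_mul_blackening_sub_one_add_mul_deriv (a c : ℝ) (k : ℕ) {r : ℝ} (hr : r ≠ 0) :
    k * (blackening a c k r - 1) + r * (-(k * a / r ^ (k + 1)) + (k + 1) * c / r ^ (k + 2)) =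
      c / r ^ (k + 1) := by
  unfold blackening
  field_simp
  ring

lemma sqrt_mul_meanCurvature_sub {ℓ r W W' d : ℝ} (hℓ : 0 < ℓ) (hr : 0 < r) (hW : 0 < W) :
    √(r ^ 2 / ℓ ^ 2 * W) * ((√(r ^ 2 / ℓ ^ 2 * W))⁻¹ *
      ((2 * r / ℓ ^ 2 * W + r ^ 2 / ℓ ^ 2 * W') / 2 + (d - 2) * (r ^ 2 / ℓ ^ 2 * W) / r) -
        (d - 1) / ℓ) =
      r / (2 * ℓ ^ 2) * ((d - 1) * (W - 1) + r * W' + (d - 1) * (√W - 1) ^ 2) := by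
  obtain ⟨s, hs, rfl⟩ : ∃ s, 0 < s ∧ s ^ 2 = W := ⟨√W, Real.sqrt_pos.2 hW, Real.sq_sqrt hW.le⟩
  rw [← div_pow, ← mul_pow, Real.sqrt_sq (by positivity), Real.sqrt_sq hs.le]
  field_simp
  ring

lemma tendsto_pow_mul_sqrt_blackening_sub_one_sq (a c : ℝ) (m : ℕ) :
    Tendsto (fun r : ℝ => r ^ (m + 3) * (√(blackening a c (m + 2) r) - 1) ^ 2) atTop (𝓝 0) := by
  have hbound : Tendsto (fun r : ℝ => (a - c / r) ^ 2 / r ^ (m + 1)) atTop (𝓝 0) :=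
    (((tendsto_const_nhds.div_atTop tendsto_id).const_sub a).pow 2).div_atTop
      (tendsto_pow_atTop (by omega))
  refine squeeze_zero' ?_ ?_ (by simpa using hbound)
  · filter_upwards [eventually_ge_atTop 0] with r hr
    positivity
  filter_upwards [eventually_gt_atTop 0] with r hr
  calc r ^ (m + 3) * (√(blackening a c (m + 2) r) - 1) ^ 2
      ≤ r ^ (m + 3) * (blackening a c (m + 2) r - 1) ^ 2 :=
        mul_le_mul_of_nonneg_left (sq_sqrt_sub_one_le _) (by positivity)
    _ = (a - c / r) ^ 2 / r ^ (m + 1) := by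
        unfold blackening
        field_simp
        ring

lemma pow_mul_sqrt_mul_meanCurvature_sub {m : ℕ} {ℓ a c r : ℝ} {V : ℝ → ℝ} (hℓ : 0 < ℓ)
    (hV : ∀ x > 0, V x = x ^ 2 / ℓ ^ 2 * blackening a c (m + 2) x) (hr : 0 < r) (hVr : 0 < V r) :
    r ^ (m + 2) * √(V r) * ((√(V r))⁻¹ * (deriv V r / 2 + (((m + 3 : ℕ) : ℝ) - 2) * V r / r) -
        (((m + 3 : ℕ) : ℝ) - 1) / ℓ) =
      (c + (m + 2) * (r ^ (m + 3) * (√(blackening a c (m + 2) r) - 1) ^ 2)) / (2 * ℓ ^ 2) := by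
  have hW : 0 < blackening a c (m + 2) r :=
    pos_of_mul_pos_right (hV r hr ▸ hVr) (by positivity)
  have hderiv : deriv V r = 2 * r / ℓ ^ 2 * blackening a c (m + 2) r +
      r ^ 2 / ℓ ^ 2 *
        (-((m + 2 : ℕ) * a / r ^ (m + 2 + 1)) + ((m + 2 : ℕ) + 1) * c / r ^ (m + 2 + 2)) := by
    have hVnhds : V =ᶠ[𝓝 r] fun x => x ^ 2 / ℓ ^ 2 * blackening a c (m + 2) x :=
      eventually_of_mem (Ioi_mem_nhds hr) hV
    rw [hVnhds.deriv_eq]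
    refine (((hasDerivAt_pow 2 r).div_const _).mul
      (hasDerivAt_blackening a c (m + 2) hr.ne')).deriv.trans ?_
    push_cast
    ring
  have hcancel : r ^ (m + 3) * ((m + 2 : ℕ) * (blackening a c (m + 2) r - 1) + r *
      (-((m + 2 : ℕ) * a / r ^ (m + 2 + 1)) + ((m + 2 : ℕ) + 1) * c / r ^ (m + 2 + 2))) = c := by
    rw [natCast_mul_blackening_sub_one_add_mul_deriv a c (m + 2) hr.ne']
    field_simp
  rw [mul_assoc, hV r hr, hderiv, sqrt_mul_meanCurvature_sub hℓ hr hW]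
  push_cast at hcancel ⊢
  linear_combination hcancel / (2 * ℓ ^ 2)

theorem stmt_12_general (n : ℕ) (hn : 3 ≤ n) (ℓ r₀ : ℝ) (hℓ : 0 < ℓ) (hr₀ : 0 < r₀) (a : ℝ)
    (rp : ℝ) (lam β G : ℝ) (hlam : 0 < lam) (hβ : 0 < β) (hG : 0 < G)
    (V : ℝ → ℝ)
    (hV : ∀ r > (0 : ℝ), V r = r ^ 2 / ℓ ^ 2 * (1 + a / r ^ (n - 1) - r₀ ^ n / r ^ n))
    (hVpos : ∀ r > rp, 0 < V r)
    (H : ℝ → ℝ)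
    (hH : ∀ r > rp, H r = (Real.sqrt (V r))⁻¹ * (deriv V r / 2 + ((n : ℝ) - 2) * V r / r)) :
    Tendsto (fun r => r ^ (n - 1) * Real.sqrt (V r) * (H r - ((n : ℝ) - 1) / ℓ)) atTop
      (nhds (r₀ ^ n / (2 * ℓ ^ 2))) ∧
    Tendsto (fun r => -(1 / (8 * Real.pi * G)) *
        (lam * β * r ^ (n - 2) * Real.sqrt (V r) * r * (H r - ((n : ℝ) - 1) / ℓ))) atTop
      (nhds (-(lam * β * r₀ ^ n) / (16 * Real.pi * G * ℓ ^ 2))) ∧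
    -(lam * β * r₀ ^ n) / (16 * Real.pi * G * ℓ ^ 2) < 0 := by
  obtain ⟨m, rfl⟩ : ∃ m, n = m + 3 := ⟨n - 3, by omega⟩
  rw [show m + 3 - 1 = m + 2 from rfl, show m + 3 - 2 = m + 1 from rfl]
  have hlim : Tendsto (fun r => r ^ (m + 2) * √(V r) * (H r - (((m + 3 : ℕ) : ℝ) - 1) / ℓ))
      atTop (𝓝 (r₀ ^ (m + 3) / (2 * ℓ ^ 2))) := by
    have h := ((tendsto_pow_mul_sqrt_blackening_sub_one_sq a (r₀ ^ (m + 3)) m).const_mul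
      ((m : ℝ) + 2)).const_add (r₀ ^ (m + 3)) |>.div_const (2 * ℓ ^ 2)
    rw [mul_zero, add_zero] at h
    refine h.congr' ?_
    filter_upwards [eventually_gt_atTop rp, eventually_gt_atTop 0] with r hrp hr
    rw [hH r hrp]
    exact (pow_mul_sqrt_mul_meanCurvature_sub hℓ hV hr (hVpos r hrp)).symm
  refine ⟨hlim, ?_, ?_⟩
  · convert hlim.const_mul (-(1 / (8 * Real.pi * G)) * (lam * β)) using 2 with r
    all_goals ring
  · have := Real.pi_pos
    exact div_neg_of_neg_of_pos (neg_neg_of_pos (by positivity)) (by positivity)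

/-- r^{n−1}V^{1/2}(H − (n−1)/ℓ) → r₀ⁿ/(2ℓ²), hence the Hawking–Horowitz mass
E_HH = −(1/8πG)·lim λβ r^{n−2}V^{1/2}·r·(H − H₀) equals −λβr₀ⁿ/(16πGℓ²) < 0. -/
theorem stmt_12 (n : ℕ) (hn : 3 ≤ n) (ℓ r₀ : ℝ) (hℓ : 0 < ℓ) (hr₀ : 0 < r₀) (a : ℝ)
    (rp : ℝ) (hrp : 0 < rp) (lam β G : ℝ) (hlam : 0 < lam) (hβ : 0 < β) (hG : 0 < G)
    (V : ℝ → ℝ)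
    (hV : ∀ r > (0 : ℝ), V r = r ^ 2 / ℓ ^ 2 * (1 + a / r ^ (n - 1) - r₀ ^ n / r ^ n))
    (hVpos : ∀ r > rp, 0 < V r)
    (H : ℝ → ℝ)
    (hH : ∀ r > rp, H r = (Real.sqrt (V r))⁻¹ * (deriv V r / 2 + ((n : ℝ) - 2) * V r / r)) :
    Tendsto (fun r => r ^ (n - 1) * Real.sqrt (V r) * (H r - ((n : ℝ) - 1) / ℓ)) atTop
      (nhds (r₀ ^ n / (2 * ℓ ^ 2))) ∧
    Tendsto (fun r => -(1 / (8 * Real.pi * G)) *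
        (lam * β * r ^ (n - 2) * Real.sqrt (V r) * r * (H r - ((n : ℝ) - 1) / ℓ))) atTop
      (nhds (-(lam * β * r₀ ^ n) / (16 * Real.pi * G * ℓ ^ 2))) ∧
    -(lam * β * r₀ ^ n) / (16 * Real.pi * G * ℓ ^ 2) < 0 :=
  stmt_12_general n hn ℓ r₀ hℓ hr₀ a rp lam β G hlam hβ hG V hV hVpos H hH
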